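/- arXiv:0909.2811 — 2 statements merged into one kernel-verified Lean document; each statement's English description precedes it below -/
import Mathlib

section
/- For k ≥ 2 and H ≥ 2, the sum W_k(H) = Σ y^{1/k}/η(y), over k-free positive integers y ≤ H satisfying η(y)^k ≤ H·y, is O(H^{1/k} (log H)^{k-2}). -/
/-!
It suffices to bound the sum over all `k`-free `y ≤ N`. Such a `y` factors uniquely as
`y = m ^ (k - 1) * z`, where `m` is the product of the primes dividing `y` exactly `k - 1` times;
then `z` is `(k - 1)`-free and `η(y) = m η(z)`, so `y^{1/k} / η(y) = m^{-1/k} z^{1/k} / η(z)`.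
By Bernoulli's inequality the sum of `m^{-1/k}` over `m ≤ (N / z)^{1/(k-1)}` is at most
`2 (N / z)^{1/k}`, which bounds the whole sum by `2 N^{1/k} ∑ 1 / η(z)` over `(k - 1)`-free
`z ≤ N`. The same factorization together with `∑_{m ≤ N} 1/m ≤ 1 + log N` shows, by induction
on `j`, that the sum of `1 / η(z)` over `j`-free `z ≤ N` is at most `(1 + log N)^{j-1}`.
-/

open Filter
open scoped Classical

/-- The radical of a positive integer: the product of its distinct prime divisors. -/
def radical (n : ℕ) : ℕ := ∏ p ∈ n.primeFactors, p

open Finset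

def exactPowRad (j y : ℕ) : ℕ := ∏ p ∈ y.primeFactors with y.factorization p = j, p

def exactPowCofactor (j y : ℕ) : ℕ := y / exactPowRad j y ^ j

section Decomposition

variable {j y : ℕ}

lemma exactPowRad_pos : 0 < exactPowRad j y :=
  prod_pos fun _ hp => (Nat.prime_of_mem_primeFactors (mem_filter.1 hp).1).pos

lemma factorization_exactPowRad (hj : j ≠ 0) (q : ℕ) :
    (exactPowRad j y).factorization q = if y.factorization q = j then 1 else 0 := by
  have hprime : ∀ p ∈ {p ∈ y.primeFactors | y.factorization p = j}, p.Prime :=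
    fun p hp => Nat.prime_of_mem_primeFactors (mem_filter.1 hp).1
  rw [exactPowRad, Nat.factorization_prod fun p hp => (hprime p hp).ne_zero,
    Finsupp.finsetSum_apply, sum_congr rfl fun p hp => by rw [(hprime p hp).factorization]]
  by_cases hq : y.factorization q = j
  · have : q ∈ y.primeFactors := by
      rw [← Nat.support_factorization, Finsupp.mem_support_iff]; omega
    simp [Finsupp.single_apply, hq, this]
  · simp [Finsupp.single_apply, hq]

lemma exactPowRad_pow_dvd (hj : j ≠ 0) (hy : y ≠ 0) : exactPowRad j y ^ j ∣ y := by
  rw [← Nat.factorization_le_iff_dvd (pow_pos exactPowRad_pos j).ne' hy]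
  intro q
  simp only [Nat.factorization_pow, Finsupp.smul_apply, factorization_exactPowRad hj, smul_eq_mul]
  split_ifs <;> omega

lemma exactPowRad_pow_mul_cofactor (hj : j ≠ 0) (hy : y ≠ 0) :
    exactPowRad j y ^ j * exactPowCofactor j y = y :=
  Nat.mul_div_cancel' (exactPowRad_pow_dvd hj hy)

lemma exactPowCofactor_ne_zero (hj : j ≠ 0) (hy : y ≠ 0) : exactPowCofactor j y ≠ 0 := by
  intro h
  apply hy
  rw [← exactPowRad_pow_mul_cofactor hj hy, h, mul_zero]

lemma factorization_exactPowCofactor (hj : j ≠ 0) (hy : y ≠ 0) (q : ℕ) :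
    (exactPowCofactor j y).factorization q =
      if y.factorization q = j then 0 else y.factorization q := by
  rw [exactPowCofactor, Nat.factorization_div (exactPowRad_pow_dvd hj hy)]
  simp only [Finsupp.tsub_apply, Nat.factorization_pow, Finsupp.smul_apply,
    factorization_exactPowRad hj, smul_eq_mul]
  split_ifs <;> omega

lemma primeFactors_exactPowCofactor (hj : j ≠ 0) (hy : y ≠ 0) :
    (exactPowCofactor j y).primeFactors = {p ∈ y.primeFactors | y.factorization p ≠ j} := by
  ext q
  simp only [← Nat.support_factorization, mem_filter, Finsupp.mem_support_iff,
    factorization_exactPowCofactor hj hy]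
  split_ifs <;> simp_all

lemma radical_eq_exactPowRad_mul (hj : j ≠ 0) (hy : y ≠ 0) :
    radical y = exactPowRad j y * radical (exactPowCofactor j y) := by
  rw [radical, radical, primeFactors_exactPowCofactor hj hy, exactPowRad,
    prod_filter_mul_prod_filter_not]

lemma exactPowCofactor_powFree (hj : j ≠ 0) (hy : y ≠ 0)
    (hfree : ∀ p : ℕ, p.Prime → ¬ p ^ (j + 1) ∣ y) :
    ∀ p : ℕ, p.Prime → ¬ p ^ j ∣ exactPowCofactor j y := by
  intro p hp hdvd
  have hle : y.factorization p ≤ j := by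
    by_contra h
    exact hfree p hp ((hp.pow_dvd_iff_le_factorization hy).2 (by omega))
  rw [hp.pow_dvd_iff_le_factorization (exactPowCofactor_ne_zero hj hy),
    factorization_exactPowCofactor hj hy] at hdvd
  split_ifs at hdvd <;> omega

end Decomposition

noncomputable def powerFreeUpTo (j N : ℕ) : Finset ℕ :=
  {z ∈ Icc 1 N | ∀ p : ℕ, p.Prime → ¬ p ^ j ∣ z}

lemma sum_powerFreeUpTo_le {j : ℕ} (hj : j ≠ 0) (N : ℕ) (g : ℕ → ℕ → ℝ)
    (hg : ∀ m z, 0 ≤ g m z) :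
    ∑ y ∈ powerFreeUpTo (j + 1) N, g (exactPowRad j y) (exactPowCofactor j y) ≤
      ∑ z ∈ powerFreeUpTo j N, ∑ m ∈ Icc 1 N with m ^ j * z ≤ N, g m z := by
  let split : ℕ → ℕ × ℕ := fun y => (exactPowCofactor j y, exactPowRad j y)
  have hinj : Set.InjOn split (powerFreeUpTo (j + 1) N) := by
    intro y hy y' hy' h
    simp only [powerFreeUpTo, coe_filter, mem_Icc, Set.mem_ofPred_eq] at hy hy'
    rw [← exactPowRad_pow_mul_cofactor hj (by omega : y ≠ 0),
      ← exactPowRad_pow_mul_cofactor hj (by omega : y' ≠ 0)]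
    simp only [split, Prod.mk.injEq] at h
    rw [h.1, h.2]
  have hmaps : (powerFreeUpTo (j + 1) N).image split ⊆
      {p ∈ powerFreeUpTo j N ×ˢ Icc 1 N | p.2 ^ j * p.1 ≤ N} := by
    simp only [subset_iff, mem_image, forall_exists_index, and_imp, forall_apply_eq_imp_iff₂]
    intro y hy
    simp only [powerFreeUpTo, mem_filter, mem_Icc] at hy
    obtain ⟨⟨hy1, hyN⟩, hfree⟩ := hy
    have hy0 : y ≠ 0 := by omega
    have hmul := exactPowRad_pow_mul_cofactor hj hy0
    have hm : exactPowRad j y ≤ exactPowRad j y ^ j * exactPowCofactor j y :=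
      (Nat.le_self_pow hj _).trans (Nat.le_mul_of_pos_right _
        (Nat.pos_of_ne_zero (exactPowCofactor_ne_zero hj hy0)))
    simp only [powerFreeUpTo, mem_filter, mem_product, mem_Icc, split]
    refine ⟨⟨⟨⟨Nat.pos_of_ne_zero (exactPowCofactor_ne_zero hj hy0), ?_⟩,
      exactPowCofactor_powFree hj hy0 hfree⟩, exactPowRad_pos, by omega⟩, by omega⟩
    exact (Nat.div_le_self _ _).trans hyN
  calc ∑ y ∈ powerFreeUpTo (j + 1) N, g (exactPowRad j y) (exactPowCofactor j y)
      = ∑ p ∈ (powerFreeUpTo (j + 1) N).image split, g p.2 p.1 :=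
        (sum_image (f := fun p => g p.2 p.1) hinj).symm
    _ ≤ ∑ p ∈ powerFreeUpTo j N ×ˢ Icc 1 N with p.2 ^ j * p.1 ≤ N, g p.2 p.1 :=
      sum_le_sum_of_subset_of_nonneg hmaps fun p _ _ => hg _ _
    _ = _ := sum_finset_product' (f := fun z m => g m z) _ _ _ fun p => by
        simp only [mem_filter, mem_product, and_assoc]

lemma sum_Icc_inv_le_one_add_log (n : ℕ) : ∑ m ∈ Icc 1 n, (m : ℝ)⁻¹ ≤ 1 + Real.log n := by
  simpa [harmonic_eq_sum_Icc] using harmonic_le_one_add_log n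

noncomputable def sumInvRadical (j N : ℕ) : ℝ := ∑ z ∈ powerFreeUpTo j N, (radical z : ℝ)⁻¹

lemma sumInvRadical_one_le (N : ℕ) : sumInvRadical 1 N ≤ 1 := by
  have hsub : powerFreeUpTo 1 N ⊆ {1} := by
    intro z hz
    simp only [powerFreeUpTo, pow_one, mem_filter] at hz
    by_contra hne
    obtain ⟨p, hp, hpz⟩ := Nat.exists_prime_and_dvd (mem_singleton.not.1 hne)
    exact hz.2 p hp hpz
  calc sumInvRadical 1 N ≤ ∑ z ∈ {1}, (radical z : ℝ)⁻¹ :=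
        sum_le_sum_of_subset_of_nonneg hsub fun _ _ _ => by positivity
    _ = 1 := by simp [radical]

lemma sumInvRadical_succ_le {j : ℕ} (hj : j ≠ 0) (N : ℕ) :
    sumInvRadical (j + 1) N ≤ (1 + Real.log N) * sumInvRadical j N := by
  calc sumInvRadical (j + 1) N
      = ∑ y ∈ powerFreeUpTo (j + 1) N,
          (exactPowRad j y : ℝ)⁻¹ * (radical (exactPowCofactor j y) : ℝ)⁻¹ := by
        refine sum_congr rfl fun y hy => ?_
        have hy0 : y ≠ 0 := by simp only [powerFreeUpTo, mem_filter, mem_Icc] at hy; omega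
        rw [radical_eq_exactPowRad_mul hj hy0, Nat.cast_mul, mul_inv]
    _ ≤ ∑ z ∈ powerFreeUpTo j N, ∑ m ∈ Icc 1 N with m ^ j * z ≤ N,
          (m : ℝ)⁻¹ * (radical z : ℝ)⁻¹ :=
        sum_powerFreeUpTo_le hj N (fun m z => (m : ℝ)⁻¹ * (radical z : ℝ)⁻¹) fun _ _ => by
          positivity
    _ ≤ ∑ z ∈ powerFreeUpTo j N, (1 + Real.log N) * (radical z : ℝ)⁻¹ := by
        refine sum_le_sum fun z _ => ?_
        rw [← sum_mul]
        gcongr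
        exact (sum_le_sum_of_subset_of_nonneg (filter_subset _ _) fun _ _ _ => by positivity).trans
          (sum_Icc_inv_le_one_add_log N)
    _ = (1 + Real.log N) * sumInvRadical j N := by rw [sumInvRadical, mul_sum]

lemma sumInvRadical_le {j : ℕ} (hj : j ≠ 0) (N : ℕ) :
    sumInvRadical j N ≤ (1 + Real.log N) ^ (j - 1) := by
  induction j, Nat.one_le_iff_ne_zero.2 hj using Nat.le_induction with
  | base => simpa using sumInvRadical_one_le N
  | succ j hj ih =>
    have hlog : 0 ≤ 1 + Real.log N := by linarith [Real.log_natCast_nonneg N]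
    calc sumInvRadical (j + 1) N ≤ (1 + Real.log N) * sumInvRadical j N :=
          sumInvRadical_succ_le (by omega) N
      _ ≤ (1 + Real.log N) * (1 + Real.log N) ^ (j - 1) := by gcongr; exact ih (by omega)
      _ = (1 + Real.log N) ^ (j + 1 - 1) := by rw [← pow_succ']; congr 1; omega

section RpowSum

variable {a : ℝ}

lemma mul_rpow_sub_one_le_rpow_sub (ha0 : 0 ≤ a) (ha1 : a ≤ 1) {x : ℝ} (hx : 1 ≤ x) :
    a * x ^ (a - 1) ≤ x ^ a - (x - 1) ^ a := by
  have hx0 : 0 < x := by linarith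
  have bernoulli : (1 + -x⁻¹) ^ a ≤ 1 + a * -x⁻¹ :=
    rpow_one_add_le_one_add_mul_self (by linarith [inv_le_one_of_one_le₀ hx]) ha0 ha1
  have hsplit : x - 1 = x * (1 + -x⁻¹) := by field_simp; ring
  have hpow : x ^ (a - 1) = x ^ a * x⁻¹ := by rw [Real.rpow_sub_one hx0.ne', div_eq_mul_inv]
  rw [hsplit, Real.mul_rpow hx0.le (by linarith [inv_le_one_of_one_le₀ hx]), hpow]
  nlinarith [Real.rpow_nonneg hx0.le a]

lemma mul_sum_Icc_rpow_sub_one_le (ha0 : 0 ≤ a) (ha1 : a ≤ 1) (n : ℕ) :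
    a * ∑ m ∈ Icc 1 n, (m : ℝ) ^ (a - 1) ≤ (n : ℝ) ^ a := by
  induction n with
  | zero => simpa using Real.rpow_nonneg le_rfl a
  | succ n ih =>
    rw [sum_Icc_succ_top (by omega), mul_add]
    have hstep := mul_rpow_sub_one_le_rpow_sub ha0 ha1 (x := (n + 1 : ℕ)) (by simp)
    push_cast at hstep ⊢
    rw [add_sub_cancel_right] at hstep
    linarith

lemma mul_sum_rpow_sub_one_le {s : Finset ℕ} {x : ℝ} (ha0 : 0 ≤ a) (ha1 : a ≤ 1) (hx : 0 ≤ x)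
    (hs : ∀ m ∈ s, 1 ≤ m ∧ (m : ℝ) ≤ x) :
    a * ∑ m ∈ s, (m : ℝ) ^ (a - 1) ≤ x ^ a := by
  have hsub : s ⊆ Icc 1 ⌊x⌋₊ := fun m hm =>
    mem_Icc.2 ⟨(hs m hm).1, Nat.le_floor (hs m hm).2⟩
  calc a * ∑ m ∈ s, (m : ℝ) ^ (a - 1) ≤ a * ∑ m ∈ Icc 1 ⌊x⌋₊, (m : ℝ) ^ (a - 1) := by
        gcongr
    _ ≤ (⌊x⌋₊ : ℝ) ^ a := mul_sum_Icc_rpow_sub_one_le ha0 ha1 _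
    _ ≤ x ^ a := by gcongr; exact Nat.floor_le hx

end RpowSum

lemma rpow_div_mul_eq {j : ℕ} {m z : ℝ} (r : ℝ) (hm : 0 < m) (hz : 0 ≤ z) :
    (m ^ j * z) ^ (1 / (j + 1 : ℝ)) / (m * r) =
      m ^ ((j : ℝ) / (j + 1) - 1) * (z ^ (1 / (j + 1 : ℝ)) / r) := by
  rw [Real.mul_rpow (by positivity) hz, ← Real.rpow_natCast, ← Real.rpow_mul hm.le,
    Real.rpow_sub_one hm.ne', mul_one_div]
  field_simp

lemma sum_rpow_le_of_pow_mul_le {j : ℕ} (hj : j ≠ 0) {z : ℕ} (hz : 0 < z) (N : ℕ) :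
    ∑ m ∈ Icc 1 N with m ^ j * z ≤ N, (m : ℝ) ^ ((j : ℝ) / (j + 1) - 1) ≤
      2 * ((N : ℝ) / z) ^ (1 / (j + 1 : ℝ)) := by
  set a : ℝ := j / (j + 1)
  have hjR : (1 : ℝ) ≤ j := by exact_mod_cast Nat.one_le_iff_ne_zero.2 hj
  have ha_half : 1 / 2 ≤ a := by rw [le_div_iff₀ (by positivity)]; linarith
  have ha_one : a ≤ 1 := (div_le_one (by positivity)).2 (by linarith)
  have hzR : (0 : ℝ) < z := by exact_mod_cast hz
  have hx : ∀ m ∈ {m ∈ Icc 1 N | m ^ j * z ≤ N},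
      1 ≤ m ∧ (m : ℝ) ≤ ((N : ℝ) / z) ^ (j : ℝ)⁻¹ := by
    intro m hm
    simp only [mem_filter, mem_Icc] at hm
    refine ⟨hm.1.1, (Real.le_rpow_inv_iff_of_pos (by positivity) (by positivity)
      (by positivity)).2 ?_⟩
    rw [Real.rpow_natCast, le_div_iff₀ hzR]
    exact_mod_cast hm.2
  have hbound := mul_sum_rpow_sub_one_le (by linarith) ha_one (by positivity) hx
  rw [← Real.rpow_mul (by positivity), show (j : ℝ)⁻¹ * a = 1 / (j + 1) by
    simp only [a]; field_simp] at hbound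
  have hsum : 0 ≤ ∑ m ∈ Icc 1 N with m ^ j * z ≤ N, (m : ℝ) ^ (a - 1) :=
    sum_nonneg fun _ _ => by positivity
  nlinarith

lemma sum_powerFreeUpTo_rpow_div_radical_le {k : ℕ} (hk : 2 ≤ k) (N : ℕ) :
    ∑ y ∈ powerFreeUpTo k N, (y : ℝ) ^ (1 / (k : ℝ)) / radical y ≤
      2 * (N : ℝ) ^ (1 / (k : ℝ)) * (1 + Real.log N) ^ (k - 2) := by
  obtain ⟨j, rfl⟩ : ∃ j, k = j + 1 := ⟨k - 1, by omega⟩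
  have hj : j ≠ 0 := by omega
  push_cast
  calc ∑ y ∈ powerFreeUpTo (j + 1) N, (y : ℝ) ^ (1 / (j + 1 : ℝ)) / radical y
      = ∑ y ∈ powerFreeUpTo (j + 1) N, (exactPowRad j y : ℝ) ^ ((j : ℝ) / (j + 1) - 1) *
          ((exactPowCofactor j y : ℝ) ^ (1 / (j + 1 : ℝ)) / radical (exactPowCofactor j y)) := by
        refine sum_congr rfl fun y hy => ?_
        have hy0 : y ≠ 0 := by simp only [powerFreeUpTo, mem_filter, mem_Icc] at hy; omega
        rw [← rpow_div_mul_eq _ (by exact_mod_cast exactPowRad_pos) (by positivity)]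
        norm_cast
        rw [exactPowRad_pow_mul_cofactor hj hy0, ← radical_eq_exactPowRad_mul hj hy0]
    _ ≤ ∑ z ∈ powerFreeUpTo j N, ∑ m ∈ Icc 1 N with m ^ j * z ≤ N,
          (m : ℝ) ^ ((j : ℝ) / (j + 1) - 1) * ((z : ℝ) ^ (1 / (j + 1 : ℝ)) / radical z) :=
        sum_powerFreeUpTo_le hj N (fun m z => (m : ℝ) ^ ((j : ℝ) / (j + 1) - 1) *
          ((z : ℝ) ^ (1 / (j + 1 : ℝ)) / radical z)) fun _ _ => by positivity
    _ ≤ ∑ z ∈ powerFreeUpTo j N, 2 * (N : ℝ) ^ (1 / (j + 1 : ℝ)) * (radical z : ℝ)⁻¹ := by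
        refine sum_le_sum fun z hz => ?_
        have hz0 : 0 < z := by simp only [powerFreeUpTo, mem_filter, mem_Icc] at hz; omega
        rw [← sum_mul]
        calc (∑ m ∈ Icc 1 N with m ^ j * z ≤ N, (m : ℝ) ^ ((j : ℝ) / (j + 1) - 1)) *
              ((z : ℝ) ^ (1 / (j + 1 : ℝ)) / radical z)
            ≤ 2 * ((N : ℝ) / z) ^ (1 / (j + 1 : ℝ)) *
              ((z : ℝ) ^ (1 / (j + 1 : ℝ)) / radical z) := by
              gcongr; exact sum_rpow_le_of_pow_mul_le hj hz0 N
          _ = 2 * (N : ℝ) ^ (1 / (j + 1 : ℝ)) * (radical z : ℝ)⁻¹ := by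
              rw [Real.div_rpow (by positivity) (by positivity)]
              field_simp
    _ = 2 * (N : ℝ) ^ (1 / (j + 1 : ℝ)) * sumInvRadical j N := by rw [sumInvRadical, mul_sum]
    _ ≤ 2 * (N : ℝ) ^ (1 / (j + 1 : ℝ)) * (1 + Real.log N) ^ (j + 1 - 2) := by
        gcongr
        exact sumInvRadical_le hj N

theorem W_bigO (k : ℕ) (hk : 2 ≤ k) :
    (fun H : ℝ =>
        ∑ y ∈ (Finset.Icc 1 ⌊H⌋₊).filter
            (fun y : ℕ => (∀ p : ℕ, p.Prime → ¬ p ^ k ∣ y) ∧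
              ((radical y : ℝ)) ^ k ≤ H * y),
          (y : ℝ) ^ (1 / (k : ℝ)) / (radical y))
      =O[atTop] fun H : ℝ => H ^ (1 / (k : ℝ)) * (Real.log H) ^ (k - 2) := by
  have hlog : (fun H : ℝ => 1 + Real.log H) =O[atTop] Real.log :=
    Real.isLittleO_const_log_atTop.isBigO.add (Asymptotics.isBigO_refl _ _)
  refine (Asymptotics.IsBigO.of_norm_eventuallyLE
    (g := fun H => 2 * H ^ (1 / (k : ℝ)) * (1 + Real.log H) ^ (k - 2)) ?_).trans
    (((Asymptotics.isBigO_refl _ _).mul (hlog.pow _)).const_mul_left 2 |>.congr_left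
      fun H => by ring)
  filter_upwards [eventually_ge_atTop 1] with H hH
  have hN : (⌊H⌋₊ : ℝ) ≤ H := Nat.floor_le (by linarith)
  have hN1 : (1 : ℝ) ≤ ⌊H⌋₊ := by exact_mod_cast Nat.one_le_floor_iff _ |>.2 hH
  rw [Real.norm_of_nonneg (sum_nonneg fun _ _ => by positivity)]
  calc _ ≤ ∑ y ∈ powerFreeUpTo k ⌊H⌋₊, (y : ℝ) ^ (1 / (k : ℝ)) / radical y :=
        sum_le_sum_of_subset_of_nonneg (fun y hy => by
          simp only [powerFreeUpTo, mem_filter] at hy ⊢; exact ⟨hy.1, hy.2.1⟩)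
          fun _ _ _ => by positivity
    _ ≤ 2 * (⌊H⌋₊ : ℝ) ^ (1 / (k : ℝ)) * (1 + Real.log ⌊H⌋₊) ^ (k - 2) :=
        sum_powerFreeUpTo_rpow_div_radical_le hk _
    _ ≤ 2 * H ^ (1 / (k : ℝ)) * (1 + Real.log H) ^ (k - 2) := by
        have := Real.log_nonneg hN1
        gcongr
end

section
/- For k ≥ 2 and complex s, w with Re(s) > 0 and Re(w) > 0, one has Σ_{y k-free} y^{s−w} η(y)^{−ks−1} = K(s,w) · Π_{j=1}^{k−1} ζ((k−j)s + jw + 1), where K(s,w) = Π_p { (1 + Σ_{j=1}^{k−1} p^{−(k−j)s−jw−1}) · Π_{j=1}^{k−1} (1 − p^{−(k−j)s−jw−1}) } converges absolutely. -/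
open scoped Classical

/-!
The summand is multiplicative on coprime arguments, vanishes at `p ^ e` for `e ≥ k`, and equals
`p ^ (-(k - j) s - j w - 1)` at `p ^ j` for `1 ≤ j < k`. On prime powers its norm is thus at most
`p ^ (-1 - min (Re s) (Re w))`, so the series converges absolutely and, by the Euler product,
its sum is `∏_p (1 + ∑_j p ^ (-(k - j) s - j w - 1))`. Multiplying by the Euler products of
`ζ((k - j) s + j w + 1)⁻¹` gives the convergent product `K`.
-/

open Finset

lemma tsum_eq_add_sum_Icc_of_eq_zero {M : Type*} [AddCommMonoid M] [TopologicalSpace M]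
    {k : ℕ} (hk : 1 ≤ k) {φ : ℕ → M} (hφ : ∀ e, k ≤ e → φ e = 0) :
    ∑' e, φ e = φ 0 + ∑ j ∈ Icc 1 (k - 1), φ j := by
  have hrange : range k = insert 0 (Icc 1 (k - 1)) := by
    ext e
    simp only [mem_range, mem_insert, mem_Icc]
    omega
  rw [tsum_eq_sum (s := range k) fun e he => hφ e (by simpa using he), hrange,
    sum_insert (by simp)]

/-- The partial sums of `g` are bounded by its Euler products over the primes below `N`,
whose factors are at most `exp (b p)`. -/
theorem summable_of_multiplicative_of_tsum_prime_pow_le {g : ℕ → ℝ} (hg : ∀ n, 0 ≤ g n)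
    (hg₀ : g 0 = 0) (hg₁ : g 1 = 1) (hmul : ∀ {m n}, m.Coprime n → g (m * n) = g m * g n)
    (hsum : ∀ {p}, p.Prime → Summable fun e => g (p ^ e)) {b : ℕ → ℝ} (hb : ∀ n, 0 ≤ b n)
    (hbsum : Summable b) (hle : ∀ {p}, p.Prime → ∑' e, g (p ^ e) ≤ 1 + b p) :
    Summable g := by
  refine summable_of_sum_range_le (c := Real.exp (∑' n, b n)) hg fun N => ?_
  have hsmooth := (EulerProduct.summable_and_hasSum_smoothNumbers_prod_primesBelow_tsum hg₁ hmul
    (fun hp => by simpa only [Real.norm_of_nonneg (hg _)] using hsum hp) N).2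
  calc ∑ i ∈ range N, g i = ∑ i ∈ range N, (N.smoothNumbers).indicator g i := by
        refine sum_congr rfl fun i hi => ?_
        rcases Nat.eq_zero_or_pos i with rfl | hi0
        · rw [hg₀, eq_comm, Set.indicator_apply_eq_zero]
          exact fun _ => hg₀
        · exact (Set.indicator_of_mem (Nat.mem_smoothNumbers_of_lt hi0 (mem_range.mp hi)) g).symm
    _ ≤ ∏ p ∈ N.primesBelow, ∑' e, g (p ^ e) :=
        sum_le_hasSum _ (fun i _ => Set.indicator_nonneg (fun n _ => hg n) i)
          (hasSum_subtype_iff_indicator.mp hsmooth)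
    _ ≤ ∏ p ∈ N.primesBelow, Real.exp (b p) :=
        prod_le_prod (fun p _ => tsum_nonneg fun e => hg _) fun p hp =>
          (hle (Nat.prime_of_mem_primesBelow hp)).trans (by linarith [Real.add_one_le_exp (b p)])
    _ = Real.exp (∑ p ∈ N.primesBelow, b p) := (Real.exp_sum _ _).symm
    _ ≤ Real.exp (∑' n, b n) := Real.exp_le_exp.mpr (hbsum.sum_le_tsum _ fun n _ => hb n)

theorem hasProd_one_sub_cpow_neg_riemannZeta_inv {s : ℂ} (hs : 1 < s.re) :
    HasProd (fun p : Nat.Primes => 1 - ((p : ℕ) : ℂ) ^ (-s)) (riemannZeta s)⁻¹ := by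
  simpa only [inv_inv] using
    (riemannZeta_eulerProduct_hasProd hs).inv₀ (riemannZeta_ne_zero_of_one_lt_re hs)

lemma radical_one : radical 1 = 1 := by simp [radical]

lemma radical_mul_of_coprime {m n : ℕ} (h : m.Coprime n) (hm : m ≠ 0) (hn : n ≠ 0) :
    radical (m * n) = radical m * radical n := by
  rw [radical, radical, radical, Nat.primeFactors_mul hm hn,
    prod_union h.disjoint_primeFactors]

lemma radical_prime_pow {p e : ℕ} (hp : p.Prime) (he : e ≠ 0) : radical (p ^ e) = p := by
  rw [radical, Nat.primeFactors_prime_pow he hp, prod_singleton]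

def PowerFree (k y : ℕ) : Prop := 0 < y ∧ ∀ p : ℕ, p.Prime → ¬ p ^ k ∣ y

lemma powerFree_prime_pow_iff {k p e : ℕ} (hp : p.Prime) : PowerFree k (p ^ e) ↔ e < k := by
  refine ⟨fun ⟨_, hfree⟩ => not_le.mp fun hke => hfree p hp (pow_dvd_pow p hke),
    fun hek => ⟨pow_pos hp.pos e, fun q hq hdvd => ?_⟩⟩
  have hqp : q = p := (Nat.prime_dvd_prime_iff_eq hq hp).mp
    (hq.dvd_of_dvd_pow ((dvd_pow_self q (by omega)).trans hdvd))
  subst hqp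
  exact absurd ((Nat.pow_dvd_pow_iff_le_right hq.one_lt).mp hdvd) (by omega)

lemma powerFree_one {k : ℕ} (hk : k ≠ 0) : PowerFree k 1 := by
  simpa using (powerFree_prime_pow_iff (k := k) (e := 0) Nat.prime_two).mpr (by omega)

lemma powerFree_mul_iff {k m n : ℕ} (h : m.Coprime n) :
    PowerFree k (m * n) ↔ PowerFree k m ∧ PowerFree k n := by
  constructor
  · rintro ⟨hpos, hfree⟩
    exact ⟨⟨pos_of_mul_pos_left hpos (Nat.zero_le n), fun p hp hd => hfree p hp (hd.mul_right n)⟩,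
      ⟨pos_of_mul_pos_right hpos (Nat.zero_le m), fun p hp hd => hfree p hp (hd.mul_left m)⟩⟩
  · rintro ⟨⟨hm, hfm⟩, ⟨hn, hfn⟩⟩
    have hk : k ≠ 0 := by
      rintro rfl
      exact hfm 2 Nat.prime_two (one_dvd m)
    refine ⟨Nat.mul_pos hm hn, fun p hp hd => ?_⟩
    rcases (h.isPrimePow_dvd_mul (hp.isPrimePow.pow hk)).mp hd with hdm | hdn
    exacts [hfm p hp hdm, hfn p hp hdn]

noncomputable def powerFreeTerm (k : ℕ) (s w : ℂ) (y : ℕ) : ℂ :=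
  if PowerFree k y then (y : ℂ) ^ (s - w) * ((radical y : ℕ) : ℂ) ^ (-(k : ℂ) * s - 1) else 0

section powerFreeTerm

variable {k : ℕ} {s w : ℂ}

lemma powerFreeTerm_zero : powerFreeTerm k s w 0 = 0 :=
  if_neg fun h => h.1.false

lemma powerFreeTerm_one (hk : k ≠ 0) : powerFreeTerm k s w 1 = 1 := by
  simp [powerFreeTerm, powerFree_one hk, radical_one]

lemma powerFreeTerm_mul {m n : ℕ} (h : m.Coprime n) :
    powerFreeTerm k s w (m * n) = powerFreeTerm k s w m * powerFreeTerm k s w n := by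
  by_cases hm : PowerFree k m
  · by_cases hn : PowerFree k n
    · simp only [powerFreeTerm, if_pos ((powerFree_mul_iff h).mpr ⟨hm, hn⟩), if_pos hm, if_pos hn,
        radical_mul_of_coprime h hm.1.ne' hn.1.ne', Nat.cast_mul, Complex.natCast_mul_natCast_cpow]
      ring
    · simp [powerFreeTerm, powerFree_mul_iff h, hn]
  · simp [powerFreeTerm, powerFree_mul_iff h, hm]

lemma powerFreeTerm_prime_pow_of_le {p e : ℕ} (hp : p.Prime) (hke : k ≤ e) :
    powerFreeTerm k s w (p ^ e) = 0 :=
  if_neg fun h => absurd ((powerFree_prime_pow_iff hp).mp h) (not_lt.mpr hke)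

lemma powerFreeTerm_prime_pow {p j : ℕ} (hp : p.Prime) (hj : j ∈ Icc 1 (k - 1)) :
    powerFreeTerm k s w (p ^ j) = (p : ℂ) ^ (-(((k : ℂ) - (j : ℂ)) * s) - (j : ℂ) * w - 1) := by
  rw [mem_Icc] at hj
  rw [powerFreeTerm, if_pos ((powerFree_prime_pow_iff hp).mpr (by omega)),
    radical_prime_pow hp (by omega), Nat.cast_pow, ← Complex.natCast_cpow_natCast_mul,
    ← Complex.cpow_add _ _ (Nat.cast_ne_zero.mpr hp.ne_zero)]
  ring_nf

lemma tsum_powerFreeTerm_prime_pow (hk : k ≠ 0) {p : ℕ} (hp : p.Prime) :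
    ∑' e, powerFreeTerm k s w (p ^ e) =
      1 + ∑ j ∈ Icc 1 (k - 1), (p : ℂ) ^ (-(((k : ℂ) - (j : ℂ)) * s) - (j : ℂ) * w - 1) := by
  rw [tsum_eq_add_sum_Icc_of_eq_zero (by omega) fun e => powerFreeTerm_prime_pow_of_le hp,
    pow_zero, powerFreeTerm_one hk]
  exact congrArg _ (sum_congr rfl fun j hj => powerFreeTerm_prime_pow hp hj)

lemma one_add_min_re_le_re {j : ℕ} (hj : j ∈ Icc 1 (k - 1)) (hs : 0 ≤ s.re) (hw : 0 ≤ w.re) :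
    1 + min s.re w.re ≤ (((k : ℂ) - (j : ℂ)) * s + (j : ℂ) * w + 1).re := by
  rw [mem_Icc] at hj
  have hjk : (j : ℝ) + 1 ≤ k := by exact_mod_cast (by omega : j + 1 ≤ k)
  have h1 : (1 : ℝ) ≤ j := by exact_mod_cast hj.1
  simp only [Complex.add_re, Complex.mul_re, Complex.sub_re, Complex.sub_im, Complex.natCast_re,
    Complex.natCast_im, Complex.one_re, zero_mul, sub_zero]
  nlinarith [min_le_left s.re w.re, min_le_right s.re w.re]

lemma norm_powerFreeTerm_prime_pow_le {p j : ℕ} (hp : p.Prime) (hj : j ∈ Icc 1 (k - 1))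
    (hs : 0 ≤ s.re) (hw : 0 ≤ w.re) :
    ‖powerFreeTerm k s w (p ^ j)‖ ≤ (p : ℝ) ^ (-(1 + min s.re w.re)) := by
  rw [powerFreeTerm_prime_pow hp hj, Complex.norm_natCast_cpow_of_pos hp.pos]
  refine Real.rpow_le_rpow_of_exponent_le (by exact_mod_cast hp.one_lt.le) ?_
  have := one_add_min_re_le_re hj hs hw
  simp only [Complex.add_re, Complex.sub_re, Complex.neg_re, Complex.one_re] at this ⊢
  linarith

theorem summable_norm_powerFreeTerm (hk : k ≠ 0) (hs : 0 < s.re) (hw : 0 < w.re) :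
    Summable fun y => ‖powerFreeTerm k s w y‖ := by
  refine summable_of_multiplicative_of_tsum_prime_pow_le (fun _ => norm_nonneg _)
    (by rw [powerFreeTerm_zero, norm_zero]) (by rw [powerFreeTerm_one hk, norm_one])
    (fun h => by rw [powerFreeTerm_mul h, norm_mul])
    (fun hp => summable_of_ne_finset_zero (s := range k) fun e he => by
      rw [powerFreeTerm_prime_pow_of_le hp (by simpa using he), norm_zero])
    (b := fun n => ((k - 1 : ℕ) : ℝ) * (n : ℝ) ^ (-(1 + min s.re w.re))) (fun n => by positivity)
    ((Real.summable_nat_rpow.mpr (by linarith [lt_min hs hw])).mul_left _)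
    fun {p} hp => ?_
  rw [tsum_eq_add_sum_Icc_of_eq_zero (k := k) (by omega)
    fun e he => by rw [powerFreeTerm_prime_pow_of_le hp he, norm_zero],
    pow_zero, powerFreeTerm_one hk, norm_one]
  have := sum_le_card_nsmul _ _ _ fun j hj =>
    norm_powerFreeTerm_prime_pow_le (k := k) hp hj hs.le hw.le
  rw [Nat.card_Icc, Nat.add_sub_cancel, nsmul_eq_mul] at this
  exact add_le_add_right this 1

end powerFreeTerm

theorem M_eq_K_times_zetas (k : ℕ) (hk : 2 ≤ k) (s w : ℂ)
    (hs : 0 < s.re) (hw : 0 < w.re) :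
    ∃ K : ℂ,
      HasProd (fun p : Nat.Primes =>
        (1 + ∑ j ∈ Finset.Icc 1 (k - 1),
            (((p : ℕ) : ℂ)) ^ (-(((k : ℂ) - (j : ℂ)) * s) - (j : ℂ) * w - 1)) *
          ∏ j ∈ Finset.Icc 1 (k - 1),
            (1 - (((p : ℕ) : ℂ)) ^ (-(((k : ℂ) - (j : ℂ)) * s) - (j : ℂ) * w - 1))) K ∧
      HasSum (fun y : ℕ =>
        if 0 < y ∧ ∀ p : ℕ, p.Prime → ¬ p ^ k ∣ y then
          (y : ℂ) ^ (s - w) * ((radical y : ℕ) : ℂ) ^ (-(k : ℂ) * s - 1)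
        else 0)
        (K * ∏ j ∈ Finset.Icc 1 (k - 1),
          riemannZeta (((k : ℂ) - (j : ℂ)) * s + (j : ℂ) * w + 1)) := by
  have hk₀ : k ≠ 0 := by omega
  have hsum := summable_norm_powerFreeTerm hk₀ hs hw
  have hre : ∀ j ∈ Icc 1 (k - 1), 1 < (((k : ℂ) - (j : ℂ)) * s + (j : ℂ) * w + 1).re :=
    fun j hj => (lt_add_of_pos_right 1 (lt_min hs hw)).trans_le
      (one_add_min_re_le_re hj hs.le hw.le)
  have hEuler : HasProd (fun p : Nat.Primes => 1 + ∑ j ∈ Icc 1 (k - 1),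
      ((p : ℕ) : ℂ) ^ (-(((k : ℂ) - (j : ℂ)) * s) - (j : ℂ) * w - 1))
      (∑' y, powerFreeTerm k s w y) := by
    convert EulerProduct.eulerProduct_hasProd (powerFreeTerm_one hk₀) powerFreeTerm_mul hsum
      powerFreeTerm_zero using 2 with p
    exact (tsum_powerFreeTerm_prime_pow hk₀ p.prop).symm
  have hZeta : HasProd (fun p : Nat.Primes => ∏ j ∈ Icc 1 (k - 1),
      (1 - ((p : ℕ) : ℂ) ^ (-(((k : ℂ) - (j : ℂ)) * s) - (j : ℂ) * w - 1)))
      (∏ j ∈ Icc 1 (k - 1), (riemannZeta (((k : ℂ) - (j : ℂ)) * s + (j : ℂ) * w + 1))⁻¹) :=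
    hasProd_prod fun j hj => by
      convert hasProd_one_sub_cpow_neg_riemannZeta_inv (hre j hj) using 4
      ring
  have hζ : ∏ j ∈ Icc 1 (k - 1), riemannZeta (((k : ℂ) - (j : ℂ)) * s + (j : ℂ) * w + 1) ≠ 0 :=
    prod_ne_zero_iff.mpr fun j hj => riemannZeta_ne_zero_of_one_lt_re (hre j hj)
  refine ⟨_, hEuler.mul hZeta, ?_⟩
  rw [prod_inv_distrib, inv_mul_cancel_right₀ hζ]
  have hT : HasSum (powerFreeTerm k s w) (∑' y, powerFreeTerm k s w y) := hsum.of_norm.hasSum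
  convert hT using 2 with y
  simp only [powerFreeTerm, PowerFree]
  -- the two sides differ only in the `Decidable` instance of the condition
  congr
end
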